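/- arXiv:2601.03842 — 4 statements merged into one kernel-verified Lean document; each statement's English description precedes it below -/
import Mathlib

section
/- Let f : (A → Bool) → (A → Bool). Call a three-valued interpretation I a trap space for f if for every J ∈ C(I), f J ∈ C(I). If (E i)_{i ∈ ι} is a nonempty chain of trap spaces with respect to the pointwise order ≤ₛ (i.e., totally ordered: for all i j, E i ≤ₛ E j or E j ≤ₛ E i), then there exists a trap space I such that C(I) = ⋂ᵢ C(E i) and I ≤ₛ E i for every i. -/
def leS (x y : Option Bool) : Prop := x = y ∨ y = none

def leSI {A : Type*} (I₁ I₂ : A → Option Bool) : Prop := ∀ a, leS (I₁ a) (I₂ a)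

def cube {A : Type*} (I : A → Option Bool) : Set (A → Bool) :=
  {J | ∀ a (b : Bool), I a = some b → J a = b}


def IsTrapSpace {A : Type*} (f : (A → Bool) → (A → Bool)) (I : A → Option Bool) : Prop :=
  ∀ J ∈ cube I, f J ∈ cube I

/-!
Members of a chain never fix a variable to different values, so fixing each variable wherever
some member fixes it gives a lower bound whose cube is the intersection of the cubes, and an
intersection of `f`-closed sets is `f`-closed.
-/

open Set

section

variable {A ι : Type*}

theorem isTrapSpace_iff_mapsTo {f : (A → Bool) → (A → Bool)} {I : A → Option Bool} :
    IsTrapSpace f I ↔ MapsTo f (cube I) (cube I) :=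
  ⟨fun h _ hJ => h _ hJ, fun h _ hJ => h hJ⟩

theorem IsTrapSpace.of_cube_eq_iInter {f : (A → Bool) → (A → Bool)} {E : ι → A → Option Bool}
    {I : A → Option Bool} (htrap : ∀ i, IsTrapSpace f (E i)) (hI : cube I = ⋂ i, cube (E i)) :
    IsTrapSpace f I := by
  rw [isTrapSpace_iff_mapsTo, hI]
  exact mapsTo_iInter_iInter fun i => isTrapSpace_iff_mapsTo.1 (htrap i)

theorem leS_some_some {b b' : Bool} (h : leS (some b) (some b')) : b = b' := by
  rcases h with h | h <;> simp_all

def Compatible (E : ι → A → Option Bool) : Prop :=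
  ∀ a i j (b b' : Bool), E i a = some b → E j a = some b' → b = b'

theorem compatible_of_chain {E : ι → A → Option Bool}
    (hchain : ∀ i j, leSI (E i) (E j) ∨ leSI (E j) (E i)) : Compatible E := by
  intro a i j b b' hi hj
  rcases hchain i j with h | h
  · exact leS_some_some (hi ▸ hj ▸ h a)
  · exact (leS_some_some (hj ▸ hi ▸ h a)).symm

open Classical in
/-- The `≤ₛ`-infimum of a `Compatible` family; which defined member is chosen does not matter. -/
noncomputable def iInfS (E : ι → A → Option Bool) (a : A) : Option Bool :=
  if h : ∃ i, (E i a).isSome then E h.choose a else none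

theorem iInfS_eq_some_iff {E : ι → A → Option Bool} (hE : Compatible E) {a : A} {b : Bool} :
    iInfS E a = some b ↔ ∃ i, E i a = some b := by
  unfold iInfS
  split_ifs with h
  · refine ⟨fun hb => ⟨_, hb⟩, fun ⟨i, hi⟩ => ?_⟩
    obtain ⟨b', hb'⟩ := Option.isSome_iff_exists.1 h.choose_spec
    rw [hb', hE a _ _ _ _ hb' hi]
  · simp only [not_exists, false_iff]
    exact fun i hi => h ⟨i, by simp [hi]⟩

theorem cube_iInfS {E : ι → A → Option Bool} (hE : Compatible E) :
    cube (iInfS E) = ⋂ i, cube (E i) := by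
  ext J
  simp only [cube, mem_iInter, mem_ofPred_eq, iInfS_eq_some_iff hE]
  exact ⟨fun h i a b hi => h a b ⟨i, hi⟩, fun h a b ⟨i, hi⟩ => h i a b hi⟩

theorem iInfS_leSI {E : ι → A → Option Bool} (hE : Compatible E) (i : ι) :
    leSI (iInfS E) (E i) := by
  intro a
  cases hi : E i a with
  | none => exact Or.inr rfl
  | some b => exact Or.inl ((iInfS_eq_some_iff hE).2 ⟨i, hi⟩)

end

theorem stmt_3_general {A : Type*} {ι : Type*} (f : (A → Bool) → (A → Bool))
    (E : ι → (A → Option Bool)) (htrap : ∀ i, IsTrapSpace f (E i))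
    (hchain : ∀ i j, leSI (E i) (E j) ∨ leSI (E j) (E i)) :
    ∃ I : A → Option Bool, IsTrapSpace f I ∧ cube I = ⋂ i, cube (E i) ∧ ∀ i, leSI I (E i) := by
  have hE : Compatible E := compatible_of_chain hchain
  exact ⟨iInfS E, .of_cube_eq_iInter htrap (cube_iInfS hE), cube_iInfS hE, iInfS_leSI hE⟩

theorem stmt_3 {A : Type*} {ι : Type*} [Nonempty ι] (f : (A → Bool) → (A → Bool))
    (E : ι → (A → Option Bool)) (htrap : ∀ i, IsTrapSpace f (E i))
    (hchain : ∀ i j, leSI (E i) (E j) ∨ leSI (E j) (E i)) :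
    ∃ I : A → Option Bool, IsTrapSpace f I ∧ cube I = ⋂ i, cube (E i) ∧ ∀ i, leSI I (E i) :=
  stmt_3_general f E htrap hchain
end

section
/- Let f : (A → Bool) → (A → Bool) and let S be a nonempty set of two-valued interpretations. Then there exists a unique three-valued interpretation I such that: (i) I is a trap space for f, (ii) S ⊆ C(I), and (iii) I is ≤ₛ-minimal with these properties, i.e., every trap space I' with S ⊆ C(I') satisfies I ≤ₛ I'. -/
/-! Since a three-valued interpretation fixes the variables it does not send to `none`,
the minimal trap space containing `S` is the one whose cube is the intersection of the cubes
of all trap spaces containing `S`. Such an interpretation exists because all these cubes share a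
point `J₀ ∈ S`: it fixes `a` to `J₀ a` exactly when some trap space containing `S` fixes `a`.
Uniqueness follows since `≤ₛ` is the inclusion of cubes, and cubes determine interpretations. -/

section Cube

variable {A : Type*}

theorem leSI_antisymm {I₁ I₂ : A → Option Bool} (h₁₂ : leSI I₁ I₂) (h₂₁ : leSI I₂ I₁) :
    I₁ = I₂ := by
  funext a
  rcases h₁₂ a with h | h
  · exact h
  · rcases h₂₁ a with h' | h'
    · exact h'.symm
    · rw [h, h']

theorem leSI_iff_cube_subset {I₁ I₂ : A → Option Bool} : leSI I₁ I₂ ↔ cube I₁ ⊆ cube I₂ := by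
  constructor
  · intro h J hJ a b hb
    rcases h a with h | h
    · exact hJ a b (h.trans hb)
    · simp [h] at hb
  · intro h a
    cases hb : I₂ a with
    | none => exact Or.inr rfl
    | some b =>
      -- This point of `cube I₁` disagrees with `b` at `a` unless `I₁` fixes `a`.
      have hJ : (fun x => (I₁ x).getD (!b)) ∈ cube I₁ := fun x c hc => by simp [hc]
      have hJa := h hJ a b hb
      cases ha : I₁ a with
      | none => simp [ha] at hJa
      | some c => simp_all [leS]

noncomputable def meetThrough (J₀ : A → Bool) (T : Set (A → Option Bool)) : A → Option Bool :=
  fun a => open Classical in if ∃ I ∈ T, I a ≠ none then some (J₀ a) else none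

theorem cube_meetThrough {J₀ : A → Bool} {T : Set (A → Option Bool)}
    (hJ₀ : ∀ I ∈ T, J₀ ∈ cube I) : cube (meetThrough J₀ T) = ⋂ I ∈ T, cube I := by
  ext J
  simp only [Set.mem_iInter]
  constructor
  · intro hJ I hI a b hb
    have hfix : ∃ I ∈ T, I a ≠ none := ⟨I, hI, by simp [hb]⟩
    rw [hJ a (J₀ a) (by simp [meetThrough, hfix]), hJ₀ I hI a b hb]
  · intro hJ a b hb
    by_cases hfix : ∃ I ∈ T, I a ≠ none
    · obtain ⟨I, hI, hIa⟩ := hfix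
      obtain ⟨c, hc⟩ := Option.ne_none_iff_exists'.mp hIa
      have hb' : J₀ a = b := by simp only [meetThrough] at hb; split_ifs at hb; simpa using hb
      rw [← hb', hJ I hI a c hc, hJ₀ I hI a c hc]
    · simp [meetThrough, hfix] at hb

theorem isTrapSpace_of_cube_eq_biInter {f : (A → Bool) → (A → Bool)} {I : A → Option Bool}
    {T : Set (A → Option Bool)} (hT : ∀ I' ∈ T, IsTrapSpace f I')
    (hI : cube I = ⋂ I' ∈ T, cube I') : IsTrapSpace f I := by
  intro J hJ
  rw [hI, Set.mem_iInter₂] at hJ ⊢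
  exact fun I' hI' => hT I' hI' J (hJ I' hI')

end Cube

theorem stmt_6 {A : Type*} (f : (A → Bool) → (A → Bool)) (S : Set (A → Bool))
    (hS : S.Nonempty) :
    ∃! I : A → Option Bool, IsTrapSpace f I ∧ S ⊆ cube I ∧
      ∀ I' : A → Option Bool, IsTrapSpace f I' → S ⊆ cube I' → leSI I I' := by
  obtain ⟨J₀, hJ₀⟩ := hS
  set T := {I' : A → Option Bool | IsTrapSpace f I' ∧ S ⊆ cube I'}
  have hcube : cube (meetThrough J₀ T) = ⋂ I' ∈ T, cube I' :=
    cube_meetThrough fun I' hI' => hI'.2 hJ₀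
  have hmin : ∀ I', IsTrapSpace f I' → S ⊆ cube I' → leSI (meetThrough J₀ T) I' :=
    fun I' hf hS' => leSI_iff_cube_subset.mpr (hcube ▸ Set.biInter_subset_of_mem ⟨hf, hS'⟩)
  have htrap : IsTrapSpace f (meetThrough J₀ T) :=
    isTrapSpace_of_cube_eq_biInter (fun I' hI' => hI'.1) hcube
  have hsub : S ⊆ cube (meetThrough J₀ T) := hcube ▸ Set.subset_iInter₂ fun I' hI' => hI'.2
  refine ⟨meetThrough J₀ T, ⟨htrap, hsub, hmin⟩, ?_⟩
  rintro I ⟨hf, hS', hImin⟩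
  exact leSI_antisymm (hImin _ htrap hsub) (hmin I hf hS')
end

section
/- Let f : (A → Bool) → (A → Bool) and let I₁, I₂ be two distinct ≤ₛ-minimal trap spaces for f. Then C(I₁) ∩ C(I₂) = ∅. -/
section Meet

variable {A : Type*} {I₁ I₂ : A → Option Bool}

def Consistent (I₁ I₂ : A → Option Bool) : Prop :=
  ∀ a b₁ b₂, I₁ a = some b₁ → I₂ a = some b₂ → b₁ = b₂

/-- Only meaningful for consistent `I₁`, `I₂`; otherwise `I₁` wins where they disagree. -/
def meet (I₁ I₂ : A → Option Bool) : A → Option Bool := fun a => (I₁ a).or (I₂ a)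

theorem consistent_of_mem_cube {J : A → Bool} (h₁ : J ∈ cube I₁) (h₂ : J ∈ cube I₂) :
    Consistent I₁ I₂ :=
  fun a _ _ hb₁ hb₂ => (h₁ a _ hb₁).symm.trans (h₂ a _ hb₂)

theorem cube_meet (hc : Consistent I₁ I₂) : cube (meet I₁ I₂) = cube I₁ ∩ cube I₂ := by
  ext J
  refine ⟨fun hJ => ⟨fun a b hb => hJ a b (by simp [meet, hb]), fun a b hb => ?_⟩,
    fun ⟨hJ₁, hJ₂⟩ a b hb => ?_⟩
  · cases h : I₁ a with
    | none => exact hJ a b (by simp [meet, h, hb])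
    | some b' => exact (hJ a b' (by simp [meet, h])).trans (hc a b' b h hb)
  · rcases Option.or_eq_some_iff.1 hb with h | ⟨-, h⟩
    exacts [hJ₁ a b h, hJ₂ a b h]

theorem IsTrapSpace.meet {f : (A → Bool) → (A → Bool)} (h₁ : IsTrapSpace f I₁)
    (h₂ : IsTrapSpace f I₂) (hc : Consistent I₁ I₂) : IsTrapSpace f (meet I₁ I₂) := by
  intro J hJ
  rw [cube_meet hc] at hJ ⊢
  exact ⟨h₁ J hJ.1, h₂ J hJ.2⟩

theorem leSI_meet_left : leSI (meet I₁ I₂) I₁ := by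
  intro a
  cases h : I₁ a with
  | none => exact Or.inr rfl
  | some b => exact Or.inl (by simp [meet, h])

theorem leSI_meet_right (hc : Consistent I₁ I₂) : leSI (meet I₁ I₂) I₂ := by
  intro a
  cases h₂ : I₂ a with
  | none => exact Or.inr rfl
  | some b =>
    cases h₁ : I₁ a with
    | none => exact Or.inl (by simp [meet, h₁, h₂])
    | some b' => exact Or.inl (by simp [meet, h₁, hc a b' b h₁ h₂])

end Meet

theorem stmt_7 {A : Type*} (f : (A → Bool) → (A → Bool)) (I₁ I₂ : A → Option Bool)
    (h₁ : IsTrapSpace f I₁) (h₂ : IsTrapSpace f I₂)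
    (hmin₁ : ∀ I'', IsTrapSpace f I'' → leSI I'' I₁ → I'' = I₁)
    (hmin₂ : ∀ I'', IsTrapSpace f I'' → leSI I'' I₂ → I'' = I₂)
    (hne : I₁ ≠ I₂) :
    cube I₁ ∩ cube I₂ = ∅ := by
  by_contra h
  obtain ⟨J, hJ₁, hJ₂⟩ := Set.nonempty_iff_ne_empty.2 h
  have hc : Consistent I₁ I₂ := consistent_of_mem_cube hJ₁ hJ₂
  have htrap : IsTrapSpace f (meet I₁ I₂) := h₁.meet h₂ hc
  exact hne ((hmin₁ _ htrap leSI_meet_left).symm.trans (hmin₂ _ htrap (leSI_meet_right hc)))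
end

section
/- Let A be a type, f : (A → Bool) → (A → Bool), and R : (A → Option Bool) → (A → Option Bool). Assume: (i) R is monotone with respect to the pointwise order ≤ₛ (I₁ ≤ₛ I₂ → R I₁ ≤ₛ R I₂), and (ii) R extends f on two-valued interpretations, i.e., for every J : A → Bool, R (some ∘ J) = some ∘ (f J). If a three-valued interpretation I satisfies R I ≤ₛ I, then I is a trap space for f: for every J ∈ C(I), f J ∈ C(I). -/
theorem leS_trans {x y z : Option Bool} (hxy : leS x y) (hyz : leS y z) : leS x z := by
  rcases hyz with rfl | rfl
  · exact hxy
  · exact Or.inr rfl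

theorem leSI_trans {A : Type*} {I₁ I₂ I₃ : A → Option Bool} (h₁₂ : leSI I₁ I₂)
    (h₂₃ : leSI I₂ I₃) : leSI I₁ I₃ :=
  fun a => leS_trans (h₁₂ a) (h₂₃ a)

theorem some_leS_iff {b : Bool} {y : Option Bool} : leS (some b) y ↔ ∀ c, y = some c → b = c := by
  cases y with
  | none => simp [leS]
  | some c => simp [leS, eq_comm]

theorem mem_cube_iff_leSI {A : Type*} {I : A → Option Bool} {J : A → Bool} :
    J ∈ cube I ↔ leSI (fun a => some (J a)) I :=
  forall_congr' fun _ => some_leS_iff.symm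

theorem stmt_13 {A : Type*} (f : (A → Bool) → (A → Bool))
    (R : (A → Option Bool) → (A → Option Bool))
    (hmono : ∀ I₁ I₂, leSI I₁ I₂ → leSI (R I₁) (R I₂))
    (hext : ∀ J : A → Bool, R (fun a => some (J a)) = fun a => some (f J a))
    (I : A → Option Bool) (hI : leSI (R I) I) :
    IsTrapSpace f I := by
  intro J hJ
  have hRJ : leSI (R fun a => some (J a)) I := leSI_trans (hmono _ _ (mem_cube_iff_leSI.1 hJ)) hI
  rw [hext J] at hRJ
  exact mem_cube_iff_leSI.2 hRJ
end
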